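/- arXiv:0709.2184 — 3 statements merged into one kernel-verified Lean document; each statement's English description precedes it below -/
import Mathlib

section
/- Let g : ℝ → ℝ be any function with g(x) = o(x / log x) as x → ∞, i.e., lim_{x→∞} g(x)·(log x)/x = 0. Then for infinitely many positive integers n one has π(n) ≥ g(n). -/
/-! Chebyshev's bound `π n ≥ (n log 2 - log (n + 1)) / log n` gives `c n / log n ≤ π n` for all
large `n` whenever `c < log 2`, while the hypothesis on `g` gives `g x ≤ c x / log x` for all large
`x` whenever `c > 0`. Taking `c = log 2 / 2`, in fact `g n ≤ π n` for all large `n`. -/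

open Filter Real Asymptotics Topology

theorem eventually_mul_div_log_le_primeCounting {c : ℝ} (hc : c < log 2) :
    ∀ᶠ n : ℕ in atTop, c * n / log n ≤ Nat.primeCounting n := by
  have hlog : (fun n : ℕ => log ((n + 1 : ℕ) : ℝ)) =o[atTop] fun n : ℕ => ((n + 1 : ℕ) : ℝ) :=
    isLittleO_log_id_atTop.comp_tendsto
      (tendsto_natCast_atTop_atTop.comp (tendsto_add_atTop_nat 1))
  filter_upwards [hlog.bound (by linarith : 0 < (log 2 - c) / 2), eventually_gt_atTop 1]
    with n hbound hn
  have hn' : (1 : ℝ) < n := by exact_mod_cast hn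
  rw [norm_of_nonneg (log_nonneg (by push_cast; linarith)), norm_of_nonneg (by positivity)]
    at hbound
  push_cast at hbound
  calc c * n / log n ≤ (n * log 2 - log (n + 1)) / log n := by
        gcongr
        nlinarith
    _ ≤ Nat.primeCounting n := Chebyshev.pi_ge n

theorem eventually_le_mul_div_log_of_tendsto {g : ℝ → ℝ}
    (hg : Tendsto (fun x => g x * log x / x) atTop (𝓝 0)) {c : ℝ} (hc : 0 < c) :
    ∀ᶠ x in atTop, g x ≤ c * x / log x := by
  filter_upwards [hg.eventually (gt_mem_nhds hc), eventually_gt_atTop 1] with x hx hx1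
  rw [div_lt_iff₀ (by linarith)] at hx
  rw [le_div_iff₀ (log_pos hx1)]
  exact hx.le

/-- If `g(x) = o(x / log x)` as `x → ∞`, then `π(n) ≥ g(n)` for infinitely
many positive integers `n`. -/
theorem pi_ge_g_infinitely_often (g : ℝ → ℝ)
    (hg : Filter.Tendsto (fun x : ℝ => g x * Real.log x / x) Filter.atTop (nhds 0)) :
    ∀ N : ℕ, ∃ n : ℕ, N ≤ n ∧ 0 < n ∧ g n ≤ Nat.primeCounting n := by
  have hg_le : ∀ᶠ n : ℕ in atTop, g n ≤ log 2 / 2 * n / log n :=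
    tendsto_natCast_atTop_atTop.eventually
      (eventually_le_mul_div_log_of_tendsto hg (by positivity))
  have hpi_ge : ∀ᶠ n : ℕ in atTop, log 2 / 2 * n / log n ≤ Nat.primeCounting n :=
    eventually_mul_div_log_le_primeCounting (half_lt_self (log_pos one_lt_two))
  obtain ⟨M, hM⟩ := (hg_le.and (hpi_ge.and (eventually_gt_atTop 0))).exists_forall_of_atTop
  intro N
  obtain ⟨hgn, hpin, hpos⟩ := hM (max N M) (le_max_right N M)
  exact ⟨max N M, le_max_left N M, hpos, hgn.trans hpin⟩
end

section
/- For every real number t ≥ 1, the product over all primes p with p > t of (1 + 1/(p² − 1)) is at most exp(1/t² + 1/t). -/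
/-!
Since `1 + x ≤ eˣ`, it suffices to bound every finite partial sum of `1 / (p ^ 2 - 1)` over
primes `p > t`. Enlarging it to all integers `n > k := ⌊t⌋` gives a telescoping sum, as
`1 / (n ^ 2 - 1) = (1 / (n - 1) - 1 / (n + 1)) / 2`, bounded by `(1 / k + 1 / (k + 1)) / 2`,
and this is at most `1 / (k + 1) ^ 2 + 1 / (k + 1) ≤ 1 / t ^ 2 + 1 / t` because `k ≥ 1`.
-/

open Real Finset

lemma tprod_one_add_le_exp {ι : Type*} {f : ι → ℝ} (hf : ∀ i, 0 ≤ f i) {c : ℝ}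
    (hc : ∀ s : Finset ι, ∑ i ∈ s, f i ≤ c) : ∏' i, (1 + f i) ≤ exp c := by
  by_cases hmul : Multipliable fun i ↦ 1 + f i
  · exact hmul.tprod_le_of_prod_le fun s ↦
      (prod_one_add_le_exp_sum s hf).trans (exp_le_exp.mpr (hc s))
  · rw [tprod_eq_one_of_not_multipliable hmul]
    exact one_le_exp (by simpa using hc ∅)

lemma sum_range_one_div_sq_sub_one {k : ℕ} (hk : 0 < k) (N : ℕ) :
    ∑ i ∈ range N, 1 / (((k + 1 + i : ℕ) : ℝ) ^ 2 - 1) =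
      (1 / (k : ℝ) + 1 / (k + 1) - 1 / (k + N) - 1 / (k + N + 1)) / 2 := by
  have hk' : (0 : ℝ) < k := by exact_mod_cast hk
  induction N with
  | zero => simp
  | succ N ih =>
    rw [sum_range_succ, ih]
    push_cast
    have : ((k : ℝ) + 1 + N) ^ 2 - 1 = (k + N) * (k + N + 2) := by ring
    rw [this]
    field_simp
    ring

lemma sum_one_div_sq_sub_one_le {k : ℕ} (hk : 0 < k) {s : Finset ℕ} (hs : ∀ n ∈ s, k < n) :
    ∑ n ∈ s, 1 / ((n : ℝ) ^ 2 - 1) ≤ (1 / (k : ℝ) + 1 / (k + 1)) / 2 := by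
  obtain ⟨N, hN⟩ := exists_nat_subset_range s
  have hsub : s ⊆ (range N).image (k + 1 + ·) := fun n hn ↦ by
    have := mem_range.mp (hN hn)
    have := hs n hn
    exact mem_image.mpr ⟨n - (k + 1), mem_range.mpr (by omega), by omega⟩
  have hnonneg : ∀ n ∈ (range N).image (k + 1 + ·), 0 ≤ 1 / ((n : ℝ) ^ 2 - 1) := by
    simp only [mem_image]
    rintro _ ⟨i, -, rfl⟩
    have : (1 : ℝ) ≤ ((k + 1 + i : ℕ) : ℝ) := by exact_mod_cast by omega
    exact one_div_nonneg.mpr (by nlinarith)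
  calc ∑ n ∈ s, 1 / ((n : ℝ) ^ 2 - 1)
      ≤ ∑ n ∈ (range N).image (k + 1 + ·), 1 / ((n : ℝ) ^ 2 - 1) :=
        sum_le_sum_of_subset_of_nonneg hsub fun n hn _ ↦ hnonneg n hn
    _ = (1 / (k : ℝ) + 1 / (k + 1) - 1 / (k + N) - 1 / (k + N + 1)) / 2 := by
        rw [sum_image fun _ _ _ _ h ↦ by simpa using h, sum_range_one_div_sq_sub_one hk]
    _ ≤ (1 / (k : ℝ) + 1 / (k + 1)) / 2 := by
        have : (0 : ℝ) < k := by exact_mod_cast hk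
        gcongr
        linarith [show (0 : ℝ) ≤ 1 / (k + N) + 1 / (k + N + 1) by positivity]

lemma half_one_div_add_one_div_succ_le {k : ℕ} (hk : 1 ≤ k) {t : ℝ} (ht : 0 < t)
    (htk : t < k + 1) : (1 / (k : ℝ) + 1 / (k + 1)) / 2 ≤ 1 / t ^ 2 + 1 / t := by
  have hk' : (1 : ℝ) ≤ k := by exact_mod_cast hk
  calc (1 / (k : ℝ) + 1 / (k + 1)) / 2 ≤ 1 / ((k : ℝ) + 1) ^ 2 + 1 / (k + 1) := by
        rw [div_add_div _ _ (by positivity) (by positivity),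
          div_add_div _ _ (by positivity) (by positivity), div_div,
          div_le_div_iff₀ (by positivity) (by positivity)]
        nlinarith
    _ ≤ 1 / t ^ 2 + 1 / t := by gcongr

/-- For every real `t ≥ 1`, `∏_{p prime, p > t} (1 + 1/(p² − 1)) ≤
exp(1/t² + 1/t)`. -/
theorem prod_primes_gt_le_exp (t : ℝ) (ht : 1 ≤ t) :
    (∏' p : {p : ℕ // p.Prime ∧ t < (p : ℝ)}, (1 + 1 / ((p : ℝ) ^ 2 - 1)))
      ≤ Real.exp (1 / t ^ 2 + 1 / t) := by
  have ht0 : 0 < t := by linarith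
  have hk : 1 ≤ ⌊t⌋₊ := Nat.le_floor (by exact_mod_cast ht)
  refine tprod_one_add_le_exp (fun p ↦ ?_) fun s ↦ ?_
  · have : (2 : ℝ) ≤ (p : ℕ) := by exact_mod_cast p.2.1.two_le
    exact one_div_nonneg.mpr (by nlinarith)
  calc ∑ p ∈ s, 1 / (((p : ℕ) : ℝ) ^ 2 - 1)
      = ∑ n ∈ s.map (.subtype _), 1 / ((n : ℝ) ^ 2 - 1) :=
        (sum_map s (.subtype _) fun n : ℕ ↦ 1 / ((n : ℝ) ^ 2 - 1)).symm
    _ ≤ (1 / (⌊t⌋₊ : ℝ) + 1 / (⌊t⌋₊ + 1)) / 2 :=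
        sum_one_div_sq_sub_one_le hk fun n hn ↦ by
          obtain ⟨p, -, rfl⟩ := mem_map.mp hn
          exact (Nat.floor_lt ht0.le).mpr p.2.2
    _ ≤ 1 / t ^ 2 + 1 / t := half_one_div_add_one_div_succ_le hk ht0 (Nat.lt_floor_add_one t)
end

section
/- Define a sequence of real numbers by a₂ = e and a_{n+1} = a_n + log a_n for n ≥ 2. Then for every integer n ≥ 2 one has n ≤ a_n, n·log n − n + 1 < a_n (for n ≥ 3), and a_n ≤ 2n·log n. -/
/-!
Each step adds `log aₙ ≥ 1`, so `n ≤ aₙ`. The other two bounds propagate by comparing the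
increment `log aₙ` with the increment of the bound. Above: `aₙ ≤ 2 n log n ≤ (n + 1)²` because
`e log x ≤ x`, so `log aₙ ≤ 2 log (n + 1)`. Below: the increment of `n log n - n + 1` is at most
`log (n + 1) ≤ log aₙ` as soon as `aₙ ≥ n + 1`, which holds from `a₅ ≥ 6` on; the cases
`n = 3, 4, 5` follow from `e · n log n ≤ n²`.
-/

/-- The sequence `a₂ = e`, `a_{n+1} = a_n + log a_n`, reindexed so that
`seqA k = a_{k+2}`. -/
noncomputable def seqA : ℕ → ℝ
  | 0 => Real.exp 1
  | k + 1 => seqA k + Real.log (seqA k)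

open Real

theorem Real.exp_one_mul_log_le {x : ℝ} (hx : 0 < x) : exp 1 * log x ≤ x := by
  simpa only [exp_log hx] using exp_one_mul_le_exp (x := log x)

theorem Real.mul_log_add_one_le {x : ℝ} (hx : 0 < x) : x * log (x + 1) ≤ x * log x + 1 := by
  have h : log ((x + 1) / x) ≤ (x + 1) / x - 1 := log_le_sub_one_of_pos (by positivity)
  rw [log_div (by positivity) hx.ne'] at h
  have : x * ((x + 1) / x - 1) = 1 := by field_simp; ring
  nlinarith

theorem add_log_le_two_mul_mul_log_add_one {x a : ℝ} (hx : 0 < x) (ha : 0 < a)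
    (h : a ≤ 2 * x * log x) : a + log a ≤ 2 * (x + 1) * log (x + 1) := by
  have he : 2 ≤ exp 1 := by linarith [add_one_le_exp 1]
  have hlog_x : exp 1 * log x ≤ x := exp_one_mul_log_le hx
  have hlog_mono : log x ≤ log (x + 1) := log_le_log hx (by linarith)
  have hlog_half : 2 * log x ≤ x := by
    rcases le_total 0 (log x) with hpos | hneg
    · nlinarith
    · linarith
  have hsq : 2 * x * log x ≤ (x + 1) ^ 2 := by nlinarith
  have hlog_a : log a ≤ 2 * log (x + 1) := calc
    log a ≤ log ((x + 1) ^ 2) := log_le_log ha (h.trans hsq)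
    _ = 2 * log (x + 1) := by rw [log_pow]; norm_num
  nlinarith

theorem mul_log_sub_add_one_lt_add_log {x a : ℝ} (hx : 0 < x) (ha : x + 1 ≤ a)
    (h : x * log x - x + 1 < a) : (x + 1) * log (x + 1) - (x + 1) + 1 < a + log a := by
  have hlog_a : log (x + 1) ≤ log a := log_le_log (by linarith) ha
  have hincr : x * log (x + 1) ≤ x * log x + 1 := mul_log_add_one_le hx
  nlinarith

theorem seqA_succ (k : ℕ) : seqA (k + 1) = seqA k + log (seqA k) := rfl

theorem seqA_one : seqA 1 = exp 1 + 1 := by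
  rw [seqA_succ, seqA, log_exp]

theorem exp_one_le_seqA (k : ℕ) : exp 1 ≤ seqA k := by
  induction k with
  | zero => exact le_rfl
  | succ k ih =>
    have : 0 ≤ log (seqA k) := log_nonneg ((one_le_exp zero_le_one).trans ih)
    rw [seqA_succ]
    linarith

theorem seqA_pos (k : ℕ) : 0 < seqA k := (exp_pos 1).trans_le (exp_one_le_seqA k)

theorem one_le_log_seqA (k : ℕ) : 1 ≤ log (seqA k) := by
  simpa only [log_exp] using log_le_log (exp_pos 1) (exp_one_le_seqA k)

theorem seqA_add_le (k j : ℕ) : seqA k + j ≤ seqA (k + j) := by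
  induction j with
  | zero => simp
  | succ j ih =>
    rw [← add_assoc, seqA_succ]
    push_cast
    linarith [one_le_log_seqA (k + j)]

theorem add_two_le_seqA (k : ℕ) : (k : ℝ) + 2 ≤ seqA k := by
  have := seqA_add_le 0 k
  rw [zero_add, seqA] at this
  linarith [exp_one_gt_d9]

theorem exp_one_add_two_le_seqA_two : exp 1 + 2 ≤ seqA 2 := by
  simpa only [seqA, Nat.cast_ofNat, zero_add] using seqA_add_le 0 2

theorem six_le_seqA_three : 6 ≤ seqA 3 := by
  have h2 := exp_one_add_two_le_seqA_two
  have hlog : log 4 ≤ log (seqA 2) := log_le_log (by norm_num) (by linarith [exp_one_gt_d9])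
  have hlog4 : log 4 = 2 * log 2 := by
    rw [show (4 : ℝ) = 2 ^ 2 by norm_num, log_pow]; norm_num
  rw [seqA_succ]
  linarith [exp_one_gt_d9, log_two_gt_d9]

theorem add_three_le_seqA {k : ℕ} (hk : 3 ≤ k) : (k : ℝ) + 3 ≤ seqA k := by
  obtain ⟨j, rfl⟩ := Nat.exists_eq_add_of_le hk
  have := seqA_add_le 3 j
  push_cast
  linarith [six_le_seqA_three]

theorem seqA_le_two_mul_mul_log (k : ℕ) : seqA k ≤ 2 * ((k : ℝ) + 2) * log ((k : ℝ) + 2) := by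
  induction k with
  | zero =>
    rw [seqA]
    norm_num
    linarith [exp_one_lt_d9, log_two_gt_d9]
  | succ k ih =>
    rw [seqA_succ, show ((k + 1 : ℕ) : ℝ) + 2 = ((k : ℝ) + 2) + 1 by push_cast; ring]
    exact add_log_le_two_mul_mul_log_add_one (by positivity) (seqA_pos k) ih

theorem lt_seqA {k : ℕ} (hk : 1 ≤ k) :
    ((k : ℝ) + 2) * log ((k : ℝ) + 2) - ((k : ℝ) + 2) + 1 < seqA k := by
  have he := exp_one_gt_d9
  have hbound (x : ℝ) (hx : 0 < x) : exp 1 * (x * log x) ≤ x ^ 2 := by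
    nlinarith [exp_one_mul_log_le hx]
  obtain rfl | rfl | hk3 : k = 1 ∨ k = 2 ∨ 3 ≤ k := by omega
  · have := hbound 3 (by norm_num)
    rw [seqA_one]
    norm_num
    nlinarith
  · have := hbound 4 (by norm_num)
    have := exp_one_add_two_le_seqA_two
    norm_num
    nlinarith
  clear hk
  induction k, hk3 using Nat.le_induction with
  | base =>
    have := hbound 5 (by norm_num)
    have := six_le_seqA_three
    norm_num
    nlinarith
  | succ k hk ih =>
    rw [seqA_succ, show ((k + 1 : ℕ) : ℝ) + 2 = ((k : ℝ) + 2) + 1 by push_cast; ring]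
    exact mul_log_sub_add_one_lt_add_log (by positivity)
      (by linarith [add_three_le_seqA hk]) ih

/-- For the sequence `a₂ = e`, `a_{n+1} = a_n + log a_n`, one has for all
`n ≥ 2`: `n ≤ a_n`, `n log n − n + 1 < a_n` for `n ≥ 3`, and `a_n ≤ 2 n log n`. -/
theorem seqA_bounds (n : ℕ) (hn : 2 ≤ n) :
    (n : ℝ) ≤ seqA (n - 2) ∧
      (3 ≤ n → (n : ℝ) * Real.log n - n + 1 < seqA (n - 2)) ∧
      seqA (n - 2) ≤ 2 * n * Real.log n := by
  obtain ⟨k, rfl⟩ := Nat.exists_eq_add_of_le' hn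
  simp only [Nat.add_sub_cancel, Nat.cast_add, Nat.cast_ofNat]
  refine ⟨add_two_le_seqA k, fun h3 => lt_seqA (by omega), seqA_le_two_mul_mul_log k⟩
end
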